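/- Let T, w, r be positive integers and p = 1 - w^w r^r / (w+r)^{w+r}. If N > (w + r - 1) log(2T) / (−log p), then there exists a (w,r)-cover-free family with ground set size N and T blocks. -/

import Mathlib

open Finset Real

/-- A set system `F` on `X` is a `(w,r;d)`-cover-free family. -/
def IsCFF {X : Type} [Fintype X] [DecidableEq X] (w r d : ℕ) (F : Finset (Finset X)) : Prop :=
  ∀ WS RS : Finset (Finset X), WS ⊆ F → RS ⊆ F → WS.card = w → RS.card = r →
    Disjoint WS RS → d < ((WS.inf id) \ (RS.sup id)).card

/-!
Instead of a random `N × 2T` matrix with entries equal to one with probability `w / (w + r)`,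
count all matrices with entries in `Fin (w + r)`, the first `w` values standing for one. A split
of the columns into a `w`-set and a disjoint `r`-set is bad if no row is one on the first set and
zero on the second; a split is bad for a `p ^ N` fraction of the matrices. For `w + r ≥ 3` there
are at most `(2T) ^ (w + r) / 2` splits, and the bound on `N` says `p ^ N (2T) ^ (w + r - 1) < 1`,
so the average number of bad splits is smaller than `T`. Deleting one column of each bad split of a
matrix below average leaves `T` columns without bad splits; once `T ≥ w + r` they are pairwise
distinct and form the family.

In the remaining cases (`T < w + r`, or `w = r = 1`) any antichain of size `T` is a
`(w, r)`-cover-free family, and since `p ≥ 3 / 4` we have `3 ^ N · 2T < 4 ^ N`, which makes the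
middle layer of the cube large enough.
-/

namespace CoverFree

section SetFamily

variable {X : Type} [Fintype X] [DecidableEq X]

lemma isCFF_of_card_lt {w r d : ℕ} {F : Finset (Finset X)} (hF : #F < w + r) :
    IsCFF w r d F := by
  intro WS RS hWS hRS hw hr hdisj
  have := card_le_card (union_subset hWS hRS)
  rw [card_union_of_disjoint hdisj] at this
  omega

lemma isCFF_one_one_of_isAntichain {F : Finset (Finset X)}
    (hF : IsAntichain (· ⊆ ·) (F : Set (Finset X))) : IsCFF 1 1 0 F := by
  intro WS RS hWS hRS hw hr hdisj
  obtain ⟨A, rfl⟩ := card_eq_one.mp hw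
  obtain ⟨B, rfl⟩ := card_eq_one.mp hr
  have hAB : A ≠ B := by simpa using hdisj
  rw [inf_singleton, sup_singleton, id, id, card_pos, sdiff_nonempty]
  exact hF (mem_coe.2 (hWS (mem_singleton_self A))) (mem_coe.2 (hRS (mem_singleton_self B))) hAB

variable {ι : Type*}

def IsCFFOn (w r : ℕ) (f : ι → Finset X) (I : Finset ι) : Prop :=
  ∀ ws ⊆ I, ∀ rs ⊆ I, #ws = w → #rs = r → Disjoint ws rs →
    (ws.inf f \ rs.sup f).Nonempty

/-- Two indices `c ≠ c'` can be put into a split with `c` on the `w`-side and `c'` on the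
`r`-side, which then separates `f c` from `f c'`. -/
lemma IsCFFOn.injOn [DecidableEq ι] {w r : ℕ} {f : ι → Finset X} {I : Finset ι}
    (h : IsCFFOn w r f I) (hw : 0 < w) (hr : 0 < r) (hI : w + r ≤ #I) : Set.InjOn f I := by
  intro c hc c' hc' hff
  by_contra hne
  obtain ⟨ws, hcws, hws, hwscard⟩ := exists_subsuperset_card_eq (n := w)
    (singleton_subset_iff.2 (mem_erase.2 ⟨hne, hc⟩)) (by rw [card_singleton]; exact hw)
    (by rw [card_erase_of_mem hc']; omega)
  have hwsI : ws ⊆ I := hws.trans (erase_subset _ _)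
  obtain ⟨rs, hcrs, hrs, hrscard⟩ := exists_subsuperset_card_eq (n := r)
    (singleton_subset_iff.2 (mem_sdiff.2 ⟨hc', fun h => (mem_erase.1 (hws h)).1 rfl⟩))
    (by rw [card_singleton]; exact hr) (by rw [card_sdiff_of_subset hwsI]; omega)
  obtain ⟨x, hx⟩ := h ws hwsI rs (hrs.trans sdiff_subset) hwscard hrscard
    (disjoint_left.2 fun a ha har => (mem_sdiff.1 (hrs har)).2 ha)
  rw [mem_sdiff] at hx
  refine hx.2 (le_sup (f := f) (singleton_subset_iff.1 hcrs) ?_)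
  rw [← hff]
  exact inf_le (f := f) (singleton_subset_iff.1 hcws) hx.1

lemma IsCFFOn.isCFF_image {w r : ℕ} {f : ι → Finset X} {I : Finset ι} (h : IsCFFOn w r f I)
    (hinj : Set.InjOn f I) : IsCFF w r 0 (I.image f) := by
  intro WS RS hWS hRS hw hr hdisj
  obtain ⟨ws, hws, rfl⟩ := subset_image_iff.1 hWS
  obtain ⟨rs, hrs, rfl⟩ := subset_image_iff.1 hRS
  rw [card_image_of_injOn (hinj.mono hws)] at hw
  rw [card_image_of_injOn (hinj.mono hrs)] at hr
  rw [inf_image, sup_image, Function.id_comp, card_pos]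
  exact h ws hws rs hrs hw hr (disjoint_left.2 fun c hcw hcr =>
    disjoint_left.1 hdisj (mem_image_of_mem f hcw) (mem_image_of_mem f hcr))

end SetFamily

section MiddleLayer

lemma two_pow_le_succ_mul_choose_half (n : ℕ) : 2 ^ n ≤ (n + 1) * n.choose (n / 2) :=
  calc 2 ^ n = ∑ k ∈ range (n + 1), n.choose k := (Nat.sum_range_choose n).symm
    _ ≤ ∑ _k ∈ range (n + 1), n.choose (n / 2) :=
        sum_le_sum fun k _ => Nat.choose_le_middle k n
    _ = (n + 1) * n.choose (n / 2) := by rw [sum_const, card_range, smul_eq_mul]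

lemma succ_mul_two_pow_le (n : ℕ) : (n + 1) * 2 ^ n ≤ 2 * 3 ^ n := by
  induction n with
  | zero => norm_num
  | succ n ih =>
    rcases n with _ | n
    · norm_num
    · calc (n + 1 + 1 + 1) * 2 ^ (n + 1 + 1) = 2 * ((n + 3) * 2 ^ (n + 1)) := by ring
        _ ≤ 3 * ((n + 2) * 2 ^ (n + 1)) := by
          rw [← mul_assoc, ← mul_assoc]; exact Nat.mul_le_mul_right _ (by omega)
        _ ≤ 3 * (2 * 3 ^ (n + 1)) := Nat.mul_le_mul_left 3 ih
        _ = 2 * 3 ^ (n + 1 + 1) := by ring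

lemma le_choose_half_of_three_pow_mul_lt {n T : ℕ} (h : 3 ^ n * (2 * T) < 4 ^ n) :
    T ≤ n.choose (n / 2) := by
  have h4 : 4 ^ n ≤ 3 ^ n * (2 * n.choose (n / 2)) :=
    calc 4 ^ n = 2 ^ n * 2 ^ n := by rw [← mul_pow]; norm_num
      _ ≤ 2 ^ n * ((n + 1) * n.choose (n / 2)) :=
          Nat.mul_le_mul_left _ (two_pow_le_succ_mul_choose_half n)
      _ = (n + 1) * 2 ^ n * n.choose (n / 2) := by ring
      _ ≤ 2 * 3 ^ n * n.choose (n / 2) := Nat.mul_le_mul_right _ (succ_mul_two_pow_le n)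
      _ = 3 ^ n * (2 * n.choose (n / 2)) := by ring
  have := Nat.lt_of_mul_lt_mul_left (h.trans_le h4)
  omega

lemma exists_isAntichain_card_eq (X : Type*) [Fintype X] {T : ℕ}
    (hT : T ≤ (Fintype.card X).choose (Fintype.card X / 2)) :
    ∃ F : Finset (Finset X), #F = T ∧ IsAntichain (· ⊆ ·) (F : Set (Finset X)) := by
  obtain ⟨F, hF, hFcard⟩ := exists_subset_card_eq (n := T)
    (s := powersetCard (Fintype.card X / 2) (univ : Finset X))
    (by rwa [card_powersetCard, card_univ])
  exact ⟨F, hFcard, Set.Sized.isAntichain (r := Fintype.card X / 2) fun A hA =>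
    (mem_powersetCard.1 (hF hA)).2⟩

end MiddleLayer

section Separation

variable {ι α : Type*}

def Separates (S : Finset α) (ws rs : Finset ι) (v : ι → α) : Prop :=
  (∀ c ∈ ws, v c ∈ S) ∧ ∀ c ∈ rs, v c ∉ S

instance [DecidableEq α] (S : Finset α) (ws rs : Finset ι) : DecidablePred (Separates S ws rs) :=
  fun _ => inferInstanceAs (Decidable (_ ∧ _))

variable [Fintype ι] [DecidableEq ι] [Fintype α] [DecidableEq α]

lemma card_separates (S : Finset α) {ws rs : Finset ι} (h : Disjoint ws rs) :
    #{v | Separates S ws rs v} =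
      #S ^ #ws * #Sᶜ ^ #rs * Fintype.card α ^ (Fintype.card ι - (#ws + #rs)) := by
  set t : ι → Finset α := ws.piecewise (fun _ => S) (rs.piecewise (fun _ => Sᶜ) fun _ => univ)
  have hfilter : ({v | Separates S ws rs v} : Finset (ι → α)) = Fintype.piFinset t := by
    ext v
    rw [mem_filter_univ, Fintype.mem_piFinset]
    simp only [Separates, t]
    constructor
    · rintro ⟨hw, hr⟩ c
      by_cases hcw : c ∈ ws
      · simpa [hcw] using hw c hcw
      by_cases hcr : c ∈ rs
      · simpa [hcw, hcr] using hr c hcr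
      · simp [hcw, hcr]
    · intro hv
      refine ⟨fun c hc => by simpa [hc] using hv c, fun c hc => ?_⟩
      simpa [hc, disjoint_right.mp h hc] using hv c
  have hcard : ∀ c, #(t c) =
      ws.piecewise (fun _ => #S) (rs.piecewise (fun _ => #Sᶜ) fun _ => Fintype.card α) c := by
    intro c
    by_cases hcw : c ∈ ws <;> by_cases hcr : c ∈ rs <;> simp [t, hcw, hcr]
  have hrs : univ \ ws ∩ rs = rs := by
    rw [inter_eq_right]; exact fun c hc => mem_sdiff.2 ⟨mem_univ c, disjoint_right.mp h hc⟩
  rw [hfilter, Fintype.card_piFinset, Finset.prod_congr rfl fun c _ => hcard c, prod_piecewise,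
    prod_piecewise, univ_inter, hrs, prod_const, prod_const, prod_const, sdiff_sdiff_left,
    card_univ_sdiff, sup_eq_union, card_union_of_disjoint h, mul_assoc]

lemma card_not_separates (S : Finset α) {ws rs : Finset ι} (h : Disjoint ws rs) :
    #{v | ¬Separates S ws rs v} = Fintype.card α ^ (Fintype.card ι - (#ws + #rs)) *
      (Fintype.card α ^ (#ws + #rs) - #S ^ #ws * #Sᶜ ^ #rs) := by
  have hm : #ws + #rs ≤ Fintype.card ι := card_union_of_disjoint h ▸ card_le_univ _
  rw [filter_not, card_univ_sdiff, card_separates S h, Fintype.card_pi, prod_const, card_univ,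
    Nat.mul_sub, ← pow_add, Nat.sub_add_cancel hm]
  ring_nf

variable (ι) in
def splits (w r : ℕ) : Finset (Finset ι × Finset ι) :=
  {p ∈ powersetCard w univ ×ˢ powersetCard r univ | Disjoint p.1 p.2}

@[simp]
lemma mem_splits {w r : ℕ} {p : Finset ι × Finset ι} :
    p ∈ splits ι w r ↔ #p.1 = w ∧ #p.2 = r ∧ Disjoint p.1 p.2 := by
  simp [splits, and_assoc]

lemma two_mul_choose_le_pow {n k : ℕ} (hk : 2 ≤ k) : 2 * n.choose k ≤ n ^ k :=
  calc 2 * n.choose k ≤ k.factorial * n.choose k :=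
        Nat.mul_le_mul_right _ (hk.trans (Nat.self_le_factorial k))
    _ = n.descFactorial k := (Nat.descFactorial_eq_factorial_mul_choose n k).symm
    _ ≤ n ^ k := Nat.descFactorial_le_pow n k

lemma two_mul_card_splits_le {w r : ℕ} (h : 3 ≤ w + r) :
    2 * #(splits ι w r) ≤ Fintype.card ι ^ (w + r) := by
  set n := Fintype.card ι
  have hsplits : #(splits ι w r) ≤ n.choose w * n.choose r := by
    refine (card_filter_le _ _).trans ?_
    simp [card_product, n]
  rw [pow_add]
  rcases le_or_gt 2 w with hw | hw
  · calc 2 * #(splits ι w r) ≤ 2 * n.choose w * n.choose r := by rw [mul_assoc]; omega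
      _ ≤ n ^ w * n ^ r :=
          Nat.mul_le_mul (two_mul_choose_le_pow hw) (Nat.choose_le_pow n r)
  · calc 2 * #(splits ι w r) ≤ n.choose w * (2 * n.choose r) := by
          rw [mul_left_comm]; omega
      _ ≤ n ^ w * n ^ r :=
          Nat.mul_le_mul (Nat.choose_le_pow n w) (two_mul_choose_le_pow (by omega))

end Separation

lemma card_filter_forall_apply {X β : Type*} [Fintype X] [DecidableEq X] [Fintype β]
    [DecidableEq β] (P : β → Prop) [DecidablePred P] :
    #{f : X → β | ∀ x, P (f x)} = #{b | P b} ^ Fintype.card X := by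
  have : ({f : X → β | ∀ x, P (f x)} : Finset (X → β)) =
      Fintype.piFinset fun _ => {b | P b} := by
    ext f
    simp
  rw [this, Fintype.card_piFinset, prod_const, card_univ]

lemma exists_hittingSet_card_le {ι : Type*} [DecidableEq ι] (𝒜 : Finset (Finset ι))
    (h : ∀ s ∈ 𝒜, s.Nonempty) :
    ∃ D : Finset ι, #D ≤ #𝒜 ∧ ∀ s ∈ 𝒜, ∃ c ∈ s, c ∈ D :=
  ⟨𝒜.attach.image fun s => (h s.1 s.2).choose, card_image_le.trans_eq card_attach,
    fun s hs => ⟨_, (h s hs).choose_spec, mem_image_of_mem _ (mem_attach 𝒜 ⟨s, hs⟩)⟩⟩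

section RandomMatrix

variable {X : Type} {ι α : Type*}

def column [Fintype X] [DecidableEq α] (S : Finset α) (M : X → ι → α) (c : ι) : Finset X :=
  {x | M x c ∈ S}

lemma Separates.mem_inf_sdiff_sup [Fintype X] [DecidableEq X] [DecidableEq α] {S : Finset α}
    {ws rs : Finset ι} {M : X → ι → α} {x : X} (h : Separates S ws rs (M x)) :
    x ∈ ws.inf (column S M) \ rs.sup (column S M) := by
  refine mem_sdiff.2 ⟨singleton_subset_iff.1 (Finset.le_inf fun c hc => ?_), fun hx => ?_⟩
  · simpa [column] using h.1 c hc
  · obtain ⟨c, hc, hxc⟩ := mem_sup.1 hx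
    exact h.2 c hc (by simpa [column] using hxc)

def badSplits [Fintype X] [Fintype ι] [DecidableEq ι] [DecidableEq α] (S : Finset α) (w r : ℕ)
    (M : X → ι → α) : Finset (Finset ι × Finset ι) :=
  {p ∈ splits ι w r | ∀ x, ¬Separates S p.1 p.2 (M x)}

variable [Fintype X] [DecidableEq X] [Fintype ι] [DecidableEq ι] [DecidableEq α]

lemma sum_card_badSplits [Fintype α] (S : Finset α) (w r : ℕ) :
    ∑ M : X → ι → α, #(badSplits S w r M) = #(splits ι w r) *
      (Fintype.card α ^ (Fintype.card ι - (w + r)) *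
        (Fintype.card α ^ (w + r) - #S ^ w * #Sᶜ ^ r)) ^ Fintype.card X := by
  simp only [badSplits, card_filter]
  rw [sum_comm, ← smul_eq_mul, ← sum_const]
  refine sum_congr rfl fun p hp => ?_
  obtain ⟨hw, hr, hdisj⟩ := mem_splits.1 hp
  rw [← card_filter, card_filter_forall_apply (fun v => ¬Separates S p.1 p.2 v),
    card_not_separates S hdisj, hw, hr]

lemma exists_card_badSplits_lt [Fintype α] [Nonempty α] (S : Finset α) {w r T : ℕ}
    (hm : w + r ≤ Fintype.card ι)
    (h : #(splits ι w r) * (Fintype.card α ^ (w + r) - #S ^ w * #Sᶜ ^ r) ^ Fintype.card X <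
      T * (Fintype.card α ^ (w + r)) ^ Fintype.card X) :
    ∃ M : X → ι → α, #(badSplits S w r M) < T := by
  set k := Fintype.card α
  set R := (k ^ (Fintype.card ι - (w + r))) ^ Fintype.card X
  have hR : 0 < R := by
    have : 0 < k := Fintype.card_pos
    positivity
  have hk : k ^ Fintype.card ι = k ^ (Fintype.card ι - (w + r)) * k ^ (w + r) := by
    rw [← pow_add, Nat.sub_add_cancel hm]
  obtain ⟨M, -, hM⟩ := exists_lt_of_sum_lt (s := univ)
    (f := fun M : X → ι → α => #(badSplits S w r M)) (g := fun _ => T) <| by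
    rw [sum_card_badSplits, sum_const, card_univ, Fintype.card_fun, Fintype.card_fun, smul_eq_mul,
      hk, mul_pow, mul_pow]
    calc _ = (#(splits ι w r) * (k ^ (w + r) - #S ^ w * #Sᶜ ^ r) ^ Fintype.card X) * R := by ring
      _ < (T * (k ^ (w + r)) ^ Fintype.card X) * R := Nat.mul_lt_mul_of_pos_right h hR
      _ = _ := by ring
  exact ⟨M, hM⟩

lemma exists_isCFFOn_column (S : Finset α) {w r T : ℕ} (M : X → ι → α) (hw : 0 < w)
    (hM : #(badSplits S w r M) + T ≤ Fintype.card ι) :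
    ∃ I : Finset ι, #I = T ∧ IsCFFOn w r (column S M) I := by
  obtain ⟨D, hD, hhit⟩ := exists_hittingSet_card_le ((badSplits S w r M).image Prod.fst) <| by
    simp only [mem_image, badSplits, mem_filter, mem_splits]
    rintro s ⟨p, ⟨⟨hs, -⟩, -⟩, rfl⟩
    exact card_pos.1 (hs ▸ hw)
  obtain ⟨I, hI, hIcard⟩ := exists_subset_card_eq (s := Dᶜ) (n := T) <| by
    have := hD.trans card_image_le
    rw [card_compl]
    omega
  refine ⟨I, hIcard, fun ws hws rs hrs hwcard hrcard hdisj => ?_⟩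
  have hsplit : (ws, rs) ∈ splits ι w r := mem_splits.2 ⟨hwcard, hrcard, hdisj⟩
  have hgood : ¬∀ x, ¬Separates S ws rs (M x) := fun hbad => by
    obtain ⟨c, hc, hcD⟩ := hhit ws (mem_image_of_mem Prod.fst (mem_filter.2 ⟨hsplit, hbad⟩))
    exact mem_compl.1 (hI (hws hc)) hcD
  obtain ⟨x, hx⟩ := not_forall_not.1 hgood
  exact ⟨x, hx.mem_inf_sdiff_sup⟩

end RandomMatrix

section Numerics

lemma four_mul_pow_self_mul_pow_self_le {w r : ℕ} (hw : 0 < w) (hr : 0 < r) :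
    4 * (w ^ w * r ^ r) ≤ (w + r) ^ (w + r) := by
  obtain ⟨a, rfl⟩ := Nat.exists_eq_add_one.2 hw
  obtain ⟨b, rfl⟩ := Nat.exists_eq_add_one.2 hr
  calc 4 * ((a + 1) ^ (a + 1) * (b + 1) ^ (b + 1))
      = 4 * (a + 1) * (b + 1) * ((a + 1) ^ a * (b + 1) ^ b) := by ring
    _ ≤ (a + 1 + (b + 1)) ^ 2 * ((a + 1 + (b + 1)) ^ a * (a + 1 + (b + 1)) ^ b) :=
        Nat.mul_le_mul (four_mul_le_sq_add _ _)
          (Nat.mul_le_mul (Nat.pow_le_pow_left (by omega) a) (Nat.pow_le_pow_left (by omega) b))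
    _ = (a + 1 + (b + 1)) ^ (a + 1 + (b + 1)) := by ring

lemma pow_mul_pow_lt_one_of_lt {b p x : ℝ} {N m : ℕ} (hb : 1 < b) (hp0 : 0 < p) (hp1 : p < 1)
    (hx : 0 < x) (hN : m * logb b x / -logb b p < N) : p ^ N * x ^ m < 1 := by
  have hlogp : 0 < -logb b p := neg_pos.2 (logb_neg hb hp0 hp1)
  have := (div_lt_iff₀ hlogp).1 hN
  rw [← logb_neg_iff hb (by positivity), logb_mul (by positivity) (by positivity), logb_pow,
    logb_pow]
  linarith

lemma sub_pow_mul_pow_lt_pow {A B x N m : ℕ} (hB : 0 < B) (hBA : B < A) (hx : 0 < x)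
    (hN : m * logb 2 x / -logb 2 (1 - B / A) < N) : (A - B) ^ N * x ^ m < A ^ N := by
  have hA : (0 : ℝ) < A := by exact_mod_cast hB.trans hBA
  have hp0 : (0 : ℝ) < 1 - B / A := by
    rw [sub_pos, div_lt_one hA]; exact_mod_cast hBA
  have hp1 : 1 - (B : ℝ) / A < 1 := by
    have : (0 : ℝ) < B / A := div_pos (by exact_mod_cast hB) hA
    linarith
  have h := pow_mul_pow_lt_one_of_lt one_lt_two hp0 hp1 (by exact_mod_cast hx) hN
  rw [one_sub_div hA.ne', div_pow, div_mul_eq_mul_div, div_lt_one (by positivity)] at h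
  rw [← Nat.cast_sub hBA.le] at h
  exact_mod_cast h

lemma three_pow_mul_lt_four_pow {A B x N m : ℕ} (hBA : 4 * B ≤ A) (hm : 1 ≤ m)
    (h : (A - B) ^ N * x ^ m < A ^ N) : 3 ^ N * x < 4 ^ N := by
  refine Nat.lt_of_mul_lt_mul_right (a := A ^ N) ?_
  calc 3 ^ N * x * A ^ N = (3 * A) ^ N * x := by ring
    _ ≤ (4 * (A - B)) ^ N * x ^ m :=
        Nat.mul_le_mul (Nat.pow_le_pow_left (by omega) N) (Nat.le_self_pow (by omega) x)
    _ = 4 ^ N * ((A - B) ^ N * x ^ m) := by ring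
    _ < 4 ^ N * A ^ N := Nat.mul_lt_mul_of_pos_left h (by positivity)

end Numerics

lemma exists_isCFF_of_sub_pow_mul_lt (X : Type) [Fintype X] [DecidableEq X] {w r T : ℕ}
    (hw : 0 < w) (hr : 0 < r) (h3 : 3 ≤ w + r) (hT : w + r ≤ T)
    (h : ((w + r) ^ (w + r) - w ^ w * r ^ r) ^ Fintype.card X * (2 * T) ^ (w + r - 1) <
      ((w + r) ^ (w + r)) ^ Fintype.card X) :
    ∃ F : Finset (Finset X), #F = T ∧ IsCFF w r 0 F := by
  set S : Finset (Fin (w + r)) := univ.map (Fin.castAddEmb r)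
  have hS : #S = w := by simp [S]
  have hSc : #Sᶜ = r := by rw [card_compl, hS, Fintype.card_fin]; omega
  have : Nonempty (Fin (w + r)) := ⟨⟨0, by omega⟩⟩
  set P := (w + r) ^ (w + r) - w ^ w * r ^ r
  set A := (w + r) ^ (w + r)
  set n := Fintype.card X
  have hsplits := two_mul_card_splits_le (ι := Fin (2 * T)) h3
  rw [Fintype.card_fin, ← Nat.sub_add_cancel (by omega : 1 ≤ w + r), pow_succ] at hsplits
  obtain ⟨M, hM⟩ := exists_card_badSplits_lt (X := X) (ι := Fin (2 * T)) S (w := w) (r := r)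
    (T := T) (by rw [Fintype.card_fin]; omega) <| by
    rw [hS, hSc, Fintype.card_fin]
    refine Nat.lt_of_mul_lt_mul_left (a := 2) ?_
    calc 2 * (#(splits (Fin (2 * T)) w r) * P ^ n)
        ≤ (2 * T) ^ (w + r - 1) * (2 * T) * P ^ n := by
          rw [← mul_assoc]; exact Nat.mul_le_mul_right _ hsplits
      _ = (2 * T) * (P ^ n * (2 * T) ^ (w + r - 1)) := by ring
      _ < (2 * T) * A ^ n := Nat.mul_lt_mul_of_pos_left h (by omega)
      _ = 2 * (T * A ^ n) := by ring
  obtain ⟨I, hI, hcff⟩ := exists_isCFFOn_column S (r := r) (T := T) M hw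
    (by rw [Fintype.card_fin]; omega)
  have hinj := hcff.injOn hw hr (hI.symm ▸ hT)
  exact ⟨I.image (column S M), (card_image_of_injOn hinj).trans hI, hcff.isCFF_image hinj⟩

end CoverFree

/-- Probabilistic existence: with `p = 1 - w^w r^r/(w+r)^{w+r}`, if
`N > (w+r-1) log₂ (2T) / (-log₂ p)`, then a `(w,r)`-CFF(N,T) exists. -/
theorem prob_cff_exists (w r N T : ℕ) (hw : 0 < w) (hr : 0 < r) (hT : 0 < T)
    (hN : (N : ℝ) >
      ((w + r - 1 : ℝ) * Real.logb 2 (2 * T)) /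
        (-Real.logb 2 (1 - (w : ℝ) ^ w * (r : ℝ) ^ r / ((w : ℝ) + r) ^ (w + r)))) :
    ∃ F : Finset (Finset (Fin N)), F.card = T ∧ IsCFF w r 0 F := by
  have hBA := CoverFree.four_mul_pow_self_mul_pow_self_le hw hr
  have hB : 0 < w ^ w * r ^ r := by positivity
  have hkey : ((w + r) ^ (w + r) - w ^ w * r ^ r) ^ N * (2 * T) ^ (w + r - 1) <
      ((w + r) ^ (w + r)) ^ N :=
    CoverFree.sub_pow_mul_pow_lt_pow hB (by omega) (by omega) <| by
      push_cast [Nat.cast_sub (by omega : 1 ≤ w + r)]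
      exact hN
  by_cases hmain : 3 ≤ w + r ∧ w + r ≤ T
  · exact CoverFree.exists_isCFF_of_sub_pow_mul_lt (Fin N) hw hr hmain.1 hmain.2
      (by rwa [Fintype.card_fin])
  -- Here either `T < w + r` and there is nothing to check, or `w = r = 1`.
  obtain ⟨F, hF, hanti⟩ := CoverFree.exists_isAntichain_card_eq (Fin N) (T := T) <| by
    rw [Fintype.card_fin]
    exact CoverFree.le_choose_half_of_three_pow_mul_lt
      (CoverFree.three_pow_mul_lt_four_pow hBA (by omega) hkey)
  refine ⟨F, hF, ?_⟩
  rcases lt_or_ge T (w + r) with hsmall | hlarge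
  · exact CoverFree.isCFF_of_card_lt (hF ▸ hsmall)
  · obtain ⟨rfl, rfl⟩ : w = 1 ∧ r = 1 := by omega
    exact CoverFree.isCFF_one_one_of_isAntichain hanti
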